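/- Let δ ≥ 0 and let X be a geodesic metric space satisfying the 4δ-inequality. Let γ₀ : [0,∞) → X be a geodesic ray with Busemann function b. Let a ∈ ℝ and let σ : (−∞, a] → X be a geodesic such that (σ(−n)|γ₀(n))_{γ₀(0)} → ∞ as n → ∞ (i.e. σ(t) converges to the boundary point of γ₀ as t → −∞). Then for all s, t ∈ (−∞, a]: |(b(σ(t)) − b(σ(s))) − (t − s)| ≤ 144δ. -/
import Mathlib


open Filter MeasureTheory Set

/-- `g` restricted to `s ⊆ ℝ` is an isometric (geodesic) parametrization. -/
def IsGeodesicOn {X : Type*} [MetricSpace X] (g : ℝ → X) (s : Set ℝ) : Prop :=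
  ∀ u ∈ s, ∀ v ∈ s, dist (g u) (g v) = |u - v|

/-- A geodesic from `x` to `y`, parametrized by arclength on `[0, dist x y]`. -/
def GeodesicFromTo {X : Type*} [MetricSpace X] (g : ℝ → X) (x y : X) : Prop :=
  IsGeodesicOn g (Set.Icc 0 (dist x y)) ∧ g 0 = x ∧ g (dist x y) = y

/-- `X` is a geodesic metric space: every pair of points is joined by a geodesic. -/
def GeodesicSpace (X : Type*) [MetricSpace X] : Prop :=
  ∀ x y : X, ∃ g : ℝ → X, GeodesicFromTo g x y

/-- The Gromov product `(x|y)_p` of `x` and `y` with basepoint `p`. -/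
noncomputable def gromov {X : Type*} [MetricSpace X] (p x y : X) : ℝ :=
  (dist x p + dist y p - dist x y) / 2

/-- The `4δ`-inequality for Gromov products. -/
def FourDeltaIneq (X : Type*) [MetricSpace X] (δ : ℝ) : Prop :=
  ∀ x y z p : X, gromov p x z ≥ min (gromov p x y) (gromov p y z) - 4 * δ

lemma gromov_comm' {X : Type*} [MetricSpace X] (p x y : X) :
    gromov p x y = gromov p y x := by
  unfold gromov; rw [dist_comm x y]; ring

lemma gromov_base' {X : Type*} [MetricSpace X] (p q x y : X) :
    gromov q x y - dist p q ≤ gromov p x y := by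
  unfold gromov
  have h1 := dist_triangle x p q
  have h2 := dist_triangle y p q
  linarith

lemma key9 {X : Type*} [MetricSpace X] (δ : ℝ) (hδ : 0 ≤ δ)
    (h4 : FourDeltaIneq X δ)
    (γ₀ : ℝ → X) (hray : IsGeodesicOn γ₀ (Set.Ici 0))
    (b : X → ℝ)
    (hb : ∀ x : X, Tendsto (fun t : ℝ => dist (γ₀ t) x - t) atTop (nhds (b x)))
    (a : ℝ) (σ : ℝ → X) (hσ : IsGeodesicOn σ (Set.Iic a))
    (hconv : Tendsto (fun n : ℕ => gromov (γ₀ 0) (σ (-(n : ℝ))) (γ₀ (n : ℝ))) atTop atTop)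
    (s t : ℝ) (hs : s ≤ a) (ht : t ≤ a) (hst : s ≤ t) :
    |(b (σ t) - b (σ s)) - (t - s)| ≤ 144 * δ := by
  set K := dist (γ₀ 0) (σ t) with hK
  set C := t - s + 8 * δ + 1 + K with hC
  obtain ⟨n, hn1, hn2, hn3⟩ :=
    ((hconv.eventually_ge_atTop C).and
      (((tendsto_natCast_atTop_atTop (R := ℝ)).eventually_ge_atTop C).and
       ((tendsto_natCast_atTop_atTop (R := ℝ)).eventually_ge_atTop (-s)))).exists
  have hn0 : (0 : ℝ) ≤ (n : ℝ) := Nat.cast_nonneg n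
  have hns : -(n : ℝ) ≤ s := by linarith
  have hna : -(n : ℝ) ≤ a := by linarith
  have hKnn : 0 ≤ K := dist_nonneg
  -- distances along σ
  have dst : dist (σ s) (σ t) = t - s := by
    rw [hσ s hs t ht, abs_of_nonpos (by linarith)]; ring
  have dmt : dist (σ (-(n : ℝ))) (σ t) = t + n := by
    rw [hσ _ hna t ht, abs_of_nonpos (by linarith)]; ring
  have dms : dist (σ (-(n : ℝ))) (σ s) = s + n := by
    rw [hσ _ hna s hs, abs_of_nonpos (by linarith)]; ring
  have gm : gromov (σ t) (σ (-(n : ℝ))) (σ s) = t - s := by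
    unfold gromov; rw [dmt, dms, dst]; ring
  -- eventual bound on the Gromov product
  have hQP : ∀ T : ℝ, (n : ℝ) ≤ T → |gromov (σ t) (γ₀ T) (σ s) - (t - s)| ≤ 4 * δ := by
    intro T hT
    have hT0 : (0 : ℝ) ≤ T := le_trans hn0 hT
    have g1 : gromov (γ₀ 0) (γ₀ T) (γ₀ (n : ℝ)) = n := by
      unfold gromov
      rw [hray T (Set.mem_Ici.mpr hT0) 0 (Set.mem_Ici.mpr le_rfl), hray (n : ℝ) (Set.mem_Ici.mpr hn0) 0 (Set.mem_Ici.mpr le_rfl), hray T (Set.mem_Ici.mpr hT0) (n : ℝ) (Set.mem_Ici.mpr hn0),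
        abs_of_nonneg (by linarith : (0:ℝ) ≤ T - 0),
        abs_of_nonneg (by linarith : (0:ℝ) ≤ (n:ℝ) - 0),
        abs_of_nonneg (by linarith : (0:ℝ) ≤ T - (n:ℝ))]
      ring
    have hQ : t - s + 4 * δ + 1 ≤ gromov (σ t) (γ₀ T) (σ (-(n : ℝ))) := by
      have b1 := gromov_base' (σ t) (γ₀ 0) (γ₀ T) (σ (-(n : ℝ)))
      have b2 := h4 (γ₀ T) (γ₀ (n : ℝ)) (σ (-(n : ℝ))) (γ₀ 0)
      have hm : C ≤ min (gromov (γ₀ 0) (γ₀ T) (γ₀ (n : ℝ)))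
          (gromov (γ₀ 0) (γ₀ (n : ℝ)) (σ (-(n : ℝ)))) := by
        apply le_min
        · rw [g1]; exact hn2
        · rw [gromov_comm']; exact hn1
      have hd : dist (σ t) (γ₀ 0) = K := dist_comm _ _
      have := le_trans (by linarith [le_min_iff.mp hm] : min (gromov (γ₀ 0) (γ₀ T) (γ₀ (n : ℝ)))
          (gromov (γ₀ 0) (γ₀ (n : ℝ)) (σ (-(n : ℝ)))) - 4 * δ ≤ gromov (γ₀ 0) (γ₀ T) (σ (-(n : ℝ)))) (le_refl _)
      rw [hd] at b1
      have hmin := le_min_iff.mp hm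
      linarith [b2, b1, hmin.1, hmin.2,
        min_le_left (gromov (γ₀ 0) (γ₀ T) (γ₀ (n : ℝ))) (gromov (γ₀ 0) (γ₀ (n : ℝ)) (σ (-(n : ℝ))))]
    have hub : gromov (σ t) (γ₀ T) (σ s) ≤ t - s + 4 * δ := by
      have b3 := h4 (σ (-(n : ℝ))) (γ₀ T) (σ s) (σ t)
      rw [gm] at b3
      by_contra h
      push_neg at h
      have hc : t - s + 4 * δ < min (gromov (σ t) (σ (-(n : ℝ))) (γ₀ T))
          (gromov (σ t) (γ₀ T) (σ s)) := by
        apply lt_min _ h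
        rw [gromov_comm']
        linarith
      linarith
    have hlb : t - s - 4 * δ ≤ gromov (σ t) (γ₀ T) (σ s) := by
      have b4 := h4 (γ₀ T) (σ (-(n : ℝ))) (σ s) (σ t)
      rw [gm] at b4
      have : t - s ≤ min (gromov (σ t) (γ₀ T) (σ (-(n : ℝ)))) (t - s) :=
        le_min (by linarith) le_rfl
      linarith
    rw [abs_le]; constructor <;> linarith
  -- the limit
  have hL : Tendsto (fun T => gromov (σ t) (γ₀ T) (σ s)) atTop
      (nhds ((b (σ t) - b (σ s) + (t - s)) / 2)) := by
    have h2 := (((hb (σ t)).sub (hb (σ s))).add_const (t - s)).div_const 2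
    refine h2.congr fun T => ?_
    unfold gromov
    rw [dst]
    ring
  have habs : Tendsto (fun T => |gromov (σ t) (γ₀ T) (σ s) - (t - s)|) atTop
      (nhds (|(b (σ t) - b (σ s) + (t - s)) / 2 - (t - s)|)) := (hL.sub_const _).abs
  have hle : |(b (σ t) - b (σ s) + (t - s)) / 2 - (t - s)| ≤ 4 * δ :=
    le_of_tendsto habs (eventually_atTop.2 ⟨n, hQP⟩)
  have heq : (b (σ t) - b (σ s)) - (t - s)
      = 2 * ((b (σ t) - b (σ s) + (t - s)) / 2 - (t - s)) := by ring
  rw [heq, abs_mul, abs_two]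
  linarith [abs_nonneg ((b (σ t) - b (σ s) + (t - s)) / 2 - (t - s))]

/-- Theorem: along a geodesic emanating from the boundary point of `γ₀`, the Busemann
function `b` increases linearly up to error `144δ`. -/
theorem statement9 {X : Type*} [MetricSpace X] (δ : ℝ) (hδ : 0 ≤ δ)
    (hgeo : GeodesicSpace X) (h4 : FourDeltaIneq X δ)
    (γ₀ : ℝ → X) (hray : IsGeodesicOn γ₀ (Set.Ici 0))
    (b : X → ℝ)
    (hb : ∀ x : X, Tendsto (fun t : ℝ => dist (γ₀ t) x - t) atTop (nhds (b x)))
    (a : ℝ) (σ : ℝ → X) (hσ : IsGeodesicOn σ (Set.Iic a))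
    (hconv : Tendsto (fun n : ℕ => gromov (γ₀ 0) (σ (-(n : ℝ))) (γ₀ (n : ℝ))) atTop atTop)
    (s t : ℝ) (hs : s ≤ a) (ht : t ≤ a) :
    |(b (σ t) - b (σ s)) - (t - s)| ≤ 144 * δ := by
  rcases le_total s t with h | h
  · exact key9 δ hδ h4 γ₀ hray b hb a σ hσ hconv s t hs ht h
  · have := key9 δ hδ h4 γ₀ hray b hb a σ hσ hconv t s ht hs h
    rw [show (b (σ t) - b (σ s)) - (t - s) = -((b (σ s) - b (σ t)) - (s - t)) by ring, abs_neg]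
    exact this
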